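/- Let k ≥ 6, let L be the set of ((k−2)/(k−3))⁺-A-free words over Fin k, and let L₁, L₂, L₃ be the subsets of L defined by: L₁ = words in L with prefix [0,1,…,k−3] having no factor of length k−1 with pairwise distinct letters; L₂ = words in L with prefix [0,1,…,k−2] having no factor of length k with pairwise distinct letters; L₃ = words in L with prefix [0,1,…,k−1]. Assume L₁, L₂, L₃ are nonempty and finite, and let ℓ₁, ℓ₂, ℓ₃ be the maximum lengths of words in L₁, L₂, L₃ respectively. Then every word w ∈ L satisfies |w| ≤ ℓ₁ + ℓ₂ + ℓ₃ + 4 − 2k. -/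

import Mathlib

/-- `x` is a factor (contiguous subword) of `w`. -/
def IsFactor {A : Type*} (x w : List A) : Prop := ∃ p s, w = p ++ x ++ s

/-- `w` is a strong Abelian `β`-power: `w = u₁ ++ u₂ ++ ⋯ ++ u_k ++ u'` where
`k = ⌊β⌋`, `u₁ ≠ []`, all `uᵢ` are Abelian equivalent (permutations of each other),
`u'` is Abelian equivalent to the prefix of `u₁` of length `|u'| < |u₁|`,
and `|w| = β·|u₁|`. -/
def IsStrongAPower {A : Type*} (β : ℚ) (w : List A) : Prop :=
  ∃ (u₁ : List A) (us : List (List A)) (u' : List A),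
    u₁ ≠ [] ∧
    ((us.length : ℤ) + 1 = ⌊β⌋) ∧
    (∀ u ∈ us, u.Perm u₁) ∧
    u'.length < u₁.length ∧
    u'.Perm (u₁.take u'.length) ∧
    w = (u₁ :: us).flatten ++ u' ∧
    ((w.length : ℚ) = β * u₁.length)

/-- `w` is `β`-A-free: no factor of `w` is a strong Abelian `γ`-power for a rational `γ ≥ β`. -/
def AFree {A : Type*} (β : ℚ) (w : List A) : Prop :=
  ∀ x, IsFactor x w → ∀ γ : ℚ, β ≤ γ → ¬ IsStrongAPower γ x

/-- `w` is `β⁺`-A-free: no factor of `w` is a strong Abelian `γ`-power for a rational `γ > β`. -/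
def APlusFree {A : Type*} (β : ℚ) (w : List A) : Prop :=
  ∀ x, IsFactor x w → ∀ γ : ℚ, β < γ → ¬ IsStrongAPower γ x


/-!
Call a word rainbow if its letters are pairwise distinct. In an `((n+1)/n)⁺`-A-free word two
equal letters at distance `d < n` would span a strong Abelian `((d+1)/d)`-power, so every factor
of length `n` is rainbow; for `n = k - 3` this bounds by `k - 2` the length of the free words
without rainbow factors of length `k - 2`. The bound is then lifted three times: a free word
without rainbow factors of length `m + 1` is cut at its first rainbow factor `x` of length `m`.
What precedes the last letter of `x` has no rainbow factor of length `m`, while `x` and the rest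
of the word, after renaming letters, form a word with prefix `0, 1, …, m - 1`, of length at most
`ℓ₁`, `ℓ₂`, `ℓ₃` for `m = k - 2, k - 1, k`.
-/

variable {A B : Type*}

lemma isFactor_iff_isInfix {x w : List A} : IsFactor x w ↔ x <:+: w := by
  constructor <;> rintro ⟨p, s, h⟩ <;> exact ⟨p, s, h.symm⟩

lemma IsFactor.trans {x y w : List A} (hxy : IsFactor x y) (hyw : IsFactor y w) :
    IsFactor x w :=
  isFactor_iff_isInfix.2 <| (isFactor_iff_isInfix.1 hxy).trans (isFactor_iff_isInfix.1 hyw)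

lemma IsFactor.length_le {x w : List A} (h : IsFactor x w) : x.length ≤ w.length :=
  (isFactor_iff_isInfix.1 h).length_le

lemma isFactor_map_equiv_iff (σ : A ≃ B) {y : List B} {w : List A} :
    IsFactor y (w.map σ) ↔ IsFactor (y.map σ.symm) w := by
  simp only [isFactor_iff_isInfix]
  constructor
  · intro h; simpa using h.map σ.symm
  · intro h; simpa using h.map σ

lemma IsStrongAPower.map (f : A → B) {γ : ℚ} {x : List A} (h : IsStrongAPower γ x) :
    IsStrongAPower γ (x.map f) := by
  obtain ⟨u₁, us, u', hne, hfl, hperm, hlt, hp, hx, hlen⟩ := h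
  refine ⟨u₁.map f, us.map (List.map f), u'.map f, by simpa using hne, by simpa using hfl,
    ?_, by simpa using hlt, by simpa [← List.map_take] using hp.map f, by simp [hx],
    by simpa using hlen⟩
  simp only [List.mem_map, forall_exists_index, and_imp, forall_apply_eq_imp_iff₂]
  exact fun u hu => (hperm u hu).map f

lemma APlusFree.of_isFactor {β : ℚ} {v w : List A} (hw : APlusFree β w) (hv : IsFactor v w) :
    APlusFree β v :=
  fun x hx => hw x (hx.trans hv)

lemma APlusFree.map_equiv {β : ℚ} {w : List A} (σ : A ≃ B) (hw : APlusFree β w) :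
    APlusFree β (w.map σ) := fun y hy γ hγ hpow =>
  hw (y.map σ.symm) ((isFactor_map_equiv_iff σ).1 hy) γ hγ (hpow.map σ.symm)

/-- When `|v| = |u|` the power is a square, with `v` as a second block rather than as the tail. -/
lemma isStrongAPower_append {u v : List A} (hu : u ≠ []) (hvu : v.length ≤ u.length)
    (hv : v.Perm (u.take v.length)) :
    IsStrongAPower (((u.length : ℚ) + v.length) / u.length) (u ++ v) := by
  have hpos : (0 : ℚ) < u.length := by exact_mod_cast List.length_pos_iff.2 hu
  have hlen : ((u ++ v).length : ℚ) = ((u.length : ℚ) + v.length) / u.length * u.length := by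
    rw [div_mul_cancel₀ _ hpos.ne', List.length_append, Nat.cast_add]
  rcases hvu.lt_or_eq with hlt | heq
  · have hfloor : ⌊((u.length : ℚ) + v.length) / u.length⌋ = 1 := by
      have hltQ : (v.length : ℚ) < u.length := by exact_mod_cast hlt
      rw [Int.floor_eq_iff, le_div_iff₀ hpos, div_lt_iff₀ hpos]
      constructor <;> push_cast <;> linarith
    exact ⟨u, [], v, hu, by simp [hfloor], by simp, hlt, hv, by simp, hlen⟩
  · have hfloor : ⌊((u.length : ℚ) + v.length) / u.length⌋ = 2 := by
      rw [heq, ← two_mul, mul_div_cancel_right₀ _ hpos.ne']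
      norm_num
    rw [heq, List.take_length] at hv
    exact ⟨u, [v], [], hu, by simp [hfloor], by simpa using hv, List.length_pos_iff.2 hu, by simp,
      by simp, hlen⟩

lemma isStrongAPower_cons_append_singleton (a : A) (y : List A) :
    IsStrongAPower (((y.length : ℚ) + 2) / (y.length + 1)) (a :: y ++ [a]) := by
  have h := isStrongAPower_append (u := a :: y) (v := [a]) (by simp) (by simp) (by simp)
  convert h using 2 <;> simp [add_assoc, one_add_one_eq_two]

lemma isStrongAPower_append_take_two {u : List A} (hu : 2 < u.length) :
    IsStrongAPower (((u.length : ℚ) + 2) / u.length) (u ++ u.take 2) := by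
  have hv : (u.take 2).length = 2 := by simp; omega
  have h := isStrongAPower_append (u := u) (v := u.take 2) (List.ne_nil_of_length_pos (by omega))
    (by omega) (by rw [hv])
  rwa [hv, Nat.cast_ofNat] at h

lemma exists_isFactor_cons_append_singleton_of_not_nodup :
    ∀ {x : List A}, ¬ x.Nodup → ∃ a y, IsFactor (a :: y ++ [a]) x
  | [], h => absurd List.nodup_nil h
  | b :: t, h => by
    rw [List.nodup_cons, not_and_or, not_not] at h
    rcases h with hb | ht
    · obtain ⟨s, r, rfl⟩ := List.append_of_mem hb
      exact ⟨b, s, [], r, by simp⟩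
    · obtain ⟨a, y, hy⟩ := exists_isFactor_cons_append_singleton_of_not_nodup ht
      exact ⟨a, y, hy.trans ⟨[b], [], by simp⟩⟩

lemma APlusFree.nodup_of_isFactor {n : ℕ} {w x : List A}
    (hw : APlusFree (((n : ℚ) + 1) / n) w) (hx : IsFactor x w) (hlen : x.length ≤ n) :
    x.Nodup := by
  by_contra hnd
  obtain ⟨a, y, hy⟩ := exists_isFactor_cons_append_singleton_of_not_nodup hnd
  have hyn : y.length + 2 ≤ n := by
    have := hy.length_le.trans hlen
    simp at this
    omega
  refine hw _ (hy.trans hx) _ ?_ (isStrongAPower_cons_append_singleton a y)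
  have hyn' : (y.length : ℚ) + 2 ≤ n := by exact_mod_cast hyn
  rw [div_lt_div_iff₀ (by linarith) (by positivity)]
  nlinarith

def NodupFactorFree (m : ℕ) (w : List A) : Prop :=
  ∀ x, IsFactor x w → x.length = m → ¬ x.Nodup

lemma NodupFactorFree.of_isFactor {m : ℕ} {v w : List A} (hw : NodupFactorFree m w)
    (hv : IsFactor v w) : NodupFactorFree m v :=
  fun x hx => hw x (hx.trans hv)

lemma NodupFactorFree.map_equiv {m : ℕ} {w : List A} (σ : A ≃ B) (hw : NodupFactorFree m w) :
    NodupFactorFree m (w.map σ) := fun y hy hlen hnd =>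
  hw (y.map σ.symm) ((isFactor_map_equiv_iff σ).1 hy) (by simpa using hlen)
    (hnd.map σ.symm.injective)

lemma nodupFactorFree_of_card_lt [Fintype A] {m : ℕ} (hm : Fintype.card A < m) (w : List A) :
    NodupFactorFree m w := fun _ _ hlen hnd => by
  have := hnd.length_le_card
  omega

/-- All factors of length `n` are rainbow, so the repetitions inside the first two windows of
length `n + 1` force `w` to start with `u ++ u.take 2`, where `|u| = n`. -/
lemma APlusFree.length_le_of_nodupFactorFree {n : ℕ} (hn : 3 ≤ n) {w : List A}
    (hw : APlusFree (((n : ℚ) + 1) / n) w) (h : NodupFactorFree (n + 1) w) :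
    w.length ≤ n + 1 := by
  by_contra! hlen
  obtain ⟨z, hz, hzw⟩ : ∃ z : List A, z.length = n + 2 ∧ IsFactor z w :=
    ⟨w.take (n + 2), by simp; omega, [], w.drop (n + 2), by simp⟩
  obtain ⟨a, b, t, rfl⟩ : ∃ a b t, z = a :: b :: t := by
    match z, hz with
    | a :: b :: t, _ => exact ⟨a, b, t, rfl⟩
  obtain ⟨y, c, d, rfl⟩ : ∃ y c d, t = y ++ [c, d] := by
    rcases t.eq_nil_or_concat with rfl | ⟨t', d, rfl⟩
    · simp at hz; omega
    rcases t'.eq_nil_or_concat with rfl | ⟨y, c, rfl⟩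
    · simp at hz; omega
    exact ⟨y, c, d, by simp⟩
  have hy : y.length + 2 = n := by simp at hz; omega
  have nodup_of (x : List A) (hx : IsFactor x (a :: b :: (y ++ [c, d]))) (hxl : x.length = n) :
      x.Nodup := hw.nodup_of_isFactor (hx.trans hzw) hxl.le
  have hpre := nodup_of (a :: b :: y) ⟨[], [c, d], by simp⟩ (by simp; omega)
  have hmid := nodup_of (b :: y ++ [c]) ⟨[a], [d], by simp⟩ (by simp; omega)
  have hsuf := nodup_of (y ++ [c, d]) ⟨[a, b], [], by simp⟩ (by simp; omega)
  have hwin₁ := h (a :: b :: y ++ [c]) (IsFactor.trans ⟨[], [d], by simp⟩ hzw) (by simp; omega)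
  have hwin₂ := h (b :: y ++ [c, d]) (IsFactor.trans ⟨[a], [], by simp⟩ hzw) (by simp; omega)
  have hac : a = c := by
    simp only [List.cons_append, List.nodup_cons, List.mem_cons, List.mem_append] at hpre hmid hwin₁
    grind
  have hbd : b = d := by
    simp only [List.cons_append, List.nodup_cons, List.mem_cons, List.mem_append] at hmid hsuf hwin₂
    grind
  subst hac hbd
  have hpow := isStrongAPower_append_take_two (u := a :: b :: y) (by simp; omega)
  refine hw _ (IsFactor.trans ⟨[], [], by simp⟩ hzw) _ ?_ hpow
  have hnQ : (3 : ℚ) ≤ n := by exact_mod_cast hn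
  rw [show (a :: b :: y).length = n by simp; omega]
  gcongr
  norm_num

lemma exists_eq_append_nodup_of_not_nodupFactorFree {m : ℕ} (hm : 0 < m) (w : List A)
    (h : ¬ NodupFactorFree m w) :
    ∃ p x s, w = p ++ x ++ s ∧ x.length = m ∧ x.Nodup ∧ NodupFactorFree m (p ++ x.dropLast) := by
  induction w using List.reverseRecOn with
  | nil =>
    refine absurd (fun x hx hlen => ?_) h
    rw [isFactor_iff_isInfix, List.infix_nil] at hx
    simp [hx] at hlen
    omega
  | append_singleton w a ih =>
    by_cases hw : NodupFactorFree m w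
    · obtain ⟨x, hx, hlen, hnd⟩ : ∃ x, IsFactor x (w ++ [a]) ∧ x.length = m ∧ x.Nodup := by
        simpa [NodupFactorFree] using h
      rw [isFactor_iff_isInfix, List.infix_concat_iff] at hx
      rcases hx with ⟨p, hp⟩ | hx
      · obtain ⟨x', b, rfl⟩ : ∃ x' b, x = x' ++ [b] := by
          rcases x.eq_nil_or_concat with rfl | ⟨x', b, rfl⟩
          · simp at hlen; omega
          · exact ⟨x', b, by simp⟩
        have hpx : p ++ x' = w := by
          rw [← List.append_assoc] at hp
          exact List.append_inj_left' hp rfl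
        exact ⟨p, x' ++ [b], [], by simp [hp], hlen, hnd, by simpa [hpx] using hw⟩
      · exact absurd hnd (hw x (isFactor_iff_isInfix.2 hx) hlen)
    · obtain ⟨p, x, s, rfl, hlen, hnd, hfree⟩ := ih hw
      exact ⟨p, x, s ++ [a], by simp, hlen, hnd, hfree⟩

lemma exists_perm_map_eq_take_finRange {k : ℕ} {x : List (Fin k)} (hx : x.Nodup)
    (hxk : x.length ≤ k) :
    ∃ σ : Equiv.Perm (Fin k), x.map σ = (List.finRange k).take x.length := by
  obtain ⟨σ, hσ⟩ := Equiv.Perm.exists_extending_pair (fun i : Fin x.length => x[i])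
    (Fin.castLE hxk) (List.nodup_iff_injective_get.1 hx) (Fin.castLE_injective hxk)
  refine ⟨σ, List.ext_getElem (by simpa using hxk) fun i h₁ h₂ => ?_⟩
  exact Fin.ext (by simpa using congrArg Fin.val (hσ ⟨i, by simpa using h₁⟩))

lemma length_le_or_of_nodupFactorFree {k m r B ℓ : ℕ} {β : ℚ} (hm : 0 < m) (hmk : m ≤ k)
    (hB : ∀ v : List (Fin k), APlusFree β v → NodupFactorFree m v → v.length ≤ B)
    (hℓ : ∀ v : List (Fin k), APlusFree β v → (List.finRange k).take m <+: v →
      NodupFactorFree r v → v.length ≤ ℓ)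
    {w : List (Fin k)} (hw : APlusFree β w) (hr : NodupFactorFree r w) :
    w.length ≤ B ∨ w.length + m ≤ B + 1 + ℓ := by
  by_cases hwm : NodupFactorFree m w
  · exact Or.inl (hB w hw hwm)
  obtain ⟨p, x, s, rfl, hlen, hnd, hfree⟩ := exists_eq_append_nodup_of_not_nodupFactorFree hm w hwm
  obtain ⟨σ, hσ⟩ := exists_perm_map_eq_take_finRange hnd (hlen ▸ hmk)
  have hxs : IsFactor (x ++ s) (p ++ x ++ s) := ⟨p, [], by simp⟩
  have hpx : IsFactor (p ++ x.dropLast) (p ++ x ++ s) := isFactor_iff_isInfix.2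
    (((List.prefix_append_right_inj p).2 x.dropLast_prefix).trans (List.prefix_append _ _)).isInfix
  have hbefore := hB _ (hw.of_isFactor hpx) hfree
  have hafter := hℓ _ ((hw.of_isFactor hxs).map_equiv σ)
    (by rw [List.map_append, hσ, hlen]; exact List.prefix_append _ _)
    ((hr.of_isFactor hxs).map_equiv σ)
  simp only [List.length_append, List.length_dropLast, List.length_map] at hbefore hafter ⊢
  omega

theorem statement_2 (k : ℕ) (hk : 6 ≤ k) (ℓ₁ ℓ₂ ℓ₃ : ℕ)
    (h₁ : IsGreatest (List.length ''
      {w : List (Fin k) | APlusFree (((k : ℚ) - 2) / ((k : ℚ) - 3)) w ∧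
        (List.finRange k).take (k - 2) <+: w ∧
        ∀ x, IsFactor x w → x.length = k - 1 → ¬ x.Nodup}) ℓ₁)
    (h₂ : IsGreatest (List.length ''
      {w : List (Fin k) | APlusFree (((k : ℚ) - 2) / ((k : ℚ) - 3)) w ∧
        (List.finRange k).take (k - 1) <+: w ∧
        ∀ x, IsFactor x w → x.length = k → ¬ x.Nodup}) ℓ₂)
    (h₃ : IsGreatest (List.length ''
      {w : List (Fin k) | APlusFree (((k : ℚ) - 2) / ((k : ℚ) - 3)) w ∧
        List.finRange k <+: w}) ℓ₃)
    (w : List (Fin k)) (hw : APlusFree (((k : ℚ) - 2) / ((k : ℚ) - 3)) w) :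
    (w.length : ℤ) ≤ (ℓ₁ : ℤ) + ℓ₂ + ℓ₃ + 4 - 2 * k := by
  set β : ℚ := ((k : ℚ) - 2) / ((k : ℚ) - 3)
  have hβ : β = (((k - 3 : ℕ) : ℚ) + 1) / (k - 3 : ℕ) := by
    rw [Nat.cast_sub (by omega)]; ring
  have hℓ₁ : k - 2 ≤ ℓ₁ := by obtain ⟨v, ⟨-, hp, -⟩, rfl⟩ := h₁.1; simpa using hp.length_le
  have hℓ₂ : k - 1 ≤ ℓ₂ := by obtain ⟨v, ⟨-, hp, -⟩, rfl⟩ := h₂.1; simpa using hp.length_le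
  have hℓ₃ : k ≤ ℓ₃ := by obtain ⟨v, ⟨-, hp⟩, rfl⟩ := h₃.1; simpa using hp.length_le
  have hA (v : List (Fin k)) (hv : APlusFree β v) (hv' : NodupFactorFree (k - 2) v) :
      v.length ≤ k - 2 := by
    rw [hβ] at hv
    rw [show k - 2 = k - 3 + 1 by omega] at hv' ⊢
    exact hv.length_le_of_nodupFactorFree (by omega) hv'
  have hB (v : List (Fin k)) (hv : APlusFree β v) (hv' : NodupFactorFree (k - 1) v) :
      v.length ≤ ℓ₁ + 1 := by
    have := length_le_or_of_nodupFactorFree (by omega) (by omega) hA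
      (fun v hv hp hv' => h₁.2 ⟨v, ⟨hv, hp, hv'⟩, rfl⟩) hv hv'
    omega
  have hC (v : List (Fin k)) (hv : APlusFree β v) (hv' : NodupFactorFree k v) :
      v.length + k ≤ ℓ₁ + ℓ₂ + 3 := by
    have := length_le_or_of_nodupFactorFree (by omega) (by omega) hB
      (fun v hv hp hv' => h₂.2 ⟨v, ⟨hv, hp, hv'⟩, rfl⟩) hv hv'
    omega
  have := length_le_or_of_nodupFactorFree (B := ℓ₁ + ℓ₂ + 3 - k) (r := k + 1) (by omega) le_rfl
    (fun v hv hv' => by have := hC v hv hv'; omega)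
    (fun v hv hp _ => h₃.2 ⟨v, ⟨hv, by simpa [List.take_of_length_le] using hp⟩, rfl⟩) hw
    (nodupFactorFree_of_card_lt (by simp) w)
  omega
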